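/- For a geometric chain of ideals 𝓘 = (I₁,…,I_k) in the root poset of Φ and α ∈ Φ⁺ with r_α(𝓘) = r ≤ k, one has α ∈ I_r. -/

import Mathlib

open scoped Pointwise RealInnerProductSpace

/-- A crystallographic root system together with a choice of simple system. -/
structure RootSystemData (V : Type*) [NormedAddCommGroup V] [InnerProductSpace ℝ V] where
  Φ : Set V
  S : Set V
  finite : Φ.Finite
  ne_zero : ∀ α ∈ Φ, α ≠ 0
  reflect_mem : ∀ α ∈ Φ, ∀ β ∈ Φ, β - (2 * (inner ℝ β α : ℝ) / (inner ℝ α α : ℝ)) • α ∈ Φ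
  crystal : ∀ α ∈ Φ, ∀ β ∈ Φ, ∃ m : ℤ, 2 * (inner ℝ β α : ℝ) / (inner ℝ α α : ℝ) = (m : ℝ)
  reduced : ∀ α ∈ Φ, ∀ t : ℝ, t • α ∈ Φ → t = 1 ∨ t = -1
  S_sub : S ⊆ Φ
  S_indep : LinearIndependent ℝ ((↑) : S → V)
  decomp : ∀ α ∈ Φ, α ∈ AddSubmonoid.closure S ∨ -α ∈ AddSubmonoid.closure S

namespace RootSystemData

variable {V : Type*} [NormedAddCommGroup V] [InnerProductSpace ℝ V] (D : RootSystemData V)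

/-- The positive roots. -/
def pos : Set V := {α ∈ D.Φ | α ∈ AddSubmonoid.closure D.S}

/-- The root poset order: `α ≤ β` iff `β - α` is a nonnegative integer combination
of simple roots. -/
def rle (α β : V) : Prop := β - α ∈ AddSubmonoid.closure D.S

/-- An (order) ideal of the root poset. -/
def IsIdeal (I : Set V) : Prop :=
  I ⊆ D.pos ∧ ∀ α ∈ I, ∀ β ∈ D.pos, D.rle β α → β ∈ I

/-- The order filters complementary to a chain of ideals, with the conventions
`J 0 = Φ⁺` (as `I 0 = ∅`) and `J i = J k` for `i > k`. -/
def Jf (k : ℕ) (I : ℕ → Set V) (i : ℕ) : Set V := D.pos \ I (min i k)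

/-- A geometric chain of `k` ideals in the root poset. -/
structure IsGeomChain (k : ℕ) (I : ℕ → Set V) : Prop where
  zero : I 0 = ∅
  ideal : ∀ i, 1 ≤ i → i ≤ k → D.IsIdeal (I i)
  mono : ∀ i j, i ≤ j → j ≤ k → I i ⊆ I j
  geomI : ∀ i j, i + j ≤ k → (I i + I j) ∩ D.pos ⊆ I (i + j)
  geomJ : ∀ i j, (D.Jf k I i + D.Jf k I j) ∩ D.pos ⊆ D.Jf k I (i + j)

/-- A chain of ideals is positive if `S ⊆ I k`. -/
def IsPositiveChain (k : ℕ) (I : ℕ → Set V) : Prop := D.S ⊆ I k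

/-- The set of values `r₁ + … + r_m` over all expressions `α = α₁ + … + α_m` with
`α_i ∈ I (r i)` and `1 ≤ r i ≤ k`; its least element (when it exists) is `r_α(𝓘)`. -/
def rVals (_D : RootSystemData V) (k : ℕ) (I : ℕ → Set V) (α : V) : Set ℕ :=
  {N | ∃ m : ℕ, ∃ a : Fin m → V, ∃ r : Fin m → ℕ,
    (∀ i, 1 ≤ r i ∧ r i ≤ k ∧ a i ∈ I (r i)) ∧ (∑ i, a i) = α ∧ (∑ i, r i) = N}

/-- The extension `𝓘̲` of a geometric chain of `k` ideals to a chain of `k+1` ideals,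
with `I̲_{k+1} = ⋃_{i+j=k+1} ((I_i + I_j) ∩ Φ⁺) ∪ I_k ∪ S`. -/
def Ibar (k : ℕ) (I : ℕ → Set V) : ℕ → Set V := fun i =>
  if i ≤ k then I i
  else (⋃ (p : ℕ × ℕ) (_ : p.1 + p.2 = k + 1), (I p.1 + I p.2) ∩ D.pos) ∪ I k ∪ D.S

/-- `α` is a rank `r` indecomposable element of the chain of ideals `I`. -/
def IsIndec (k : ℕ) (I : ℕ → Set V) (r : ℕ) (α : V) : Prop :=
  α ∈ I r ∧ IsLeast (D.rVals k I α) r ∧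
  (∀ i j, i + j = r → α ∉ I i + I j) ∧
  (∀ β ∈ D.pos, ∀ t, t ≤ k → IsLeast (D.rVals k I (α + β)) t → β ∈ I (t - r))

/-- The complement of the `k`-Catalan arrangement of `Φ`. -/
def catComp (k : ℕ) : Set V :=
  {x | ∀ α ∈ D.Φ, ∀ r : ℕ, r ≤ k → (inner ℝ x α : ℝ) ≠ (r : ℝ)}

/-- A region of the `k`-Catalan arrangement: a connected component of the complement. -/
def IsRegion (k : ℕ) (R : Set V) : Prop :=
  ∃ x ∈ D.catComp k, R = connectedComponentIn (D.catComp k) x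

/-- A dominant region of the `k`-Catalan arrangement. -/
def IsDomRegion (k : ℕ) (R : Set V) : Prop :=
  D.IsRegion k R ∧ ∀ x ∈ R, ∀ α ∈ D.pos, 0 < (inner ℝ x α : ℝ)

/-- The complement of the affine Coxeter arrangement of `Φ`. -/
def affComp : Set V := {x | ∀ α ∈ D.Φ, ∀ r : ℤ, (inner ℝ x α : ℝ) ≠ (r : ℝ)}

/-- An alcove: a connected component of the complement of the affine Coxeter arrangement. -/
def IsAlcove (A : Set V) : Prop :=
  ∃ x ∈ D.affComp, A = connectedComponentIn D.affComp x

/-- The hyperplane `H_α^r` supports a facet of `R`. -/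
def IsWall (_D : RootSystemData V) (R : Set V) (α : V) (r : ℝ) : Prop :=
  ∃ x, (inner ℝ x α : ℝ) = r ∧ ∃ ε > 0, ∀ y, (inner ℝ y α : ℝ) = r → dist y x < ε → y ∈ closure R

/-- `H_α^r` is a ceiling of the dominant region (or alcove) `R`: a wall not through
the origin with `R` on the same side as the origin. -/
def IsCeiling (R : Set V) (α : V) (r : ℝ) : Prop :=
  D.IsWall R α r ∧ 0 < r ∧ ∀ x ∈ R, (inner ℝ x α : ℝ) < r

/-- `H_α^r` is a floor of the dominant region (or alcove) `R`: a wall not through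
the origin separating `R` from the origin. -/
def IsFloor (R : Set V) (α : V) (r : ℝ) : Prop :=
  D.IsWall R α r ∧ 0 < r ∧ ∀ x ∈ R, r < (inner ℝ x α : ℝ)

/-- The chain of ideals `θ(R)` associated to a dominant region `R`. -/
def theta (R : Set V) : ℕ → Set V := fun i =>
  {α ∈ D.pos | ∀ x ∈ R, (inner ℝ x α : ℝ) < (i : ℝ)}

/-- `B` is the maximal alcove of the (bounded) region corresponding to the positive chain
of ideals `I`, i.e. the alcove with `r(B,α) = r_α(𝓘)` for all positive roots `α`. -/
def IsMaxAlcoveOf (k : ℕ) (I : ℕ → Set V) (B : Set V) : Prop :=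
  D.IsAlcove B ∧ ∀ α ∈ D.pos, ∃ r : ℕ, IsLeast (D.rVals k I α) r ∧
    ∀ x ∈ B, ((r : ℝ) - 1 < (inner ℝ x α : ℝ) ∧ (inner ℝ x α : ℝ) < (r : ℝ))

/-- The root system `Φ` is irreducible. -/
def Irred : Prop :=
  ∀ Φ₁ Φ₂ : Set V, Φ₁ ∪ Φ₂ = D.Φ → (∀ a ∈ Φ₁, ∀ b ∈ Φ₂, (inner ℝ a b : ℝ) = 0) →
    Φ₁ = ∅ ∨ Φ₂ = ∅

end RootSystemData

/-! Write `α = α₁ + ⋯ + α_m` with `α_i ∈ I_{r_i}` and `∑ r_i = r`. Since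
`0 < ⟪α, α⟫ = ∑ ⟪α, α_i⟫`, some `⟪α, α_i⟫` is positive, so either `α = α_i` or `α - α_i` is a
root; in the latter case it is the positive root `∑_{j ≠ i} α_j`, which lies in `I_{r - r_i}` by
induction, and `α ∈ (I_{r_i} + I_{r - r_i}) ∩ Φ⁺ ⊆ I_r` by geometricity. -/

namespace RootSystemData

variable {V : Type*} [NormedAddCommGroup V] [InnerProductSpace ℝ V] {D : RootSystemData V}

theorem inner_self_pos {α : V} (hα : α ∈ D.Φ) : 0 < ⟪α, α⟫ :=
  real_inner_self_pos.2 (D.ne_zero α hα)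

theorem neg_mem {α : V} (hα : α ∈ D.Φ) : -α ∈ D.Φ := by
  have hm := D.reflect_mem α hα α hα
  rwa [mul_div_assoc, div_self (inner_self_pos hα).ne', mul_one, two_smul, sub_add_cancel_left]
    at hm

theorem inner_lt_norm_mul_norm {α β : V} (hα : α ∈ D.Φ) (hβ : β ∈ D.Φ) (hne : α ≠ β) :
    ⟪α, β⟫ < ‖α‖ * ‖β‖ := by
  refine (real_inner_le_norm α β).lt_of_ne fun heq => ?_
  have hnorm : ‖α‖ * ‖β‖ ≠ 0 :=
    mul_ne_zero (norm_ne_zero_iff.2 (D.ne_zero α hα)) (norm_ne_zero_iff.2 (D.ne_zero β hβ))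
  obtain ⟨-, t, ht, rfl⟩ := (real_inner_div_norm_mul_norm_eq_one_iff α β).1 (by
    rw [heq, div_self hnorm])
  rcases D.reduced α hα t hβ with rfl | rfl
  · exact hne (one_smul ℝ α).symm
  · linarith

theorem pairing_mul_pairing_lt_four {α β : V} (hα : α ∈ D.Φ) (hβ : β ∈ D.Φ) (hne : α ≠ β)
    (hpos : 0 < ⟪α, β⟫) :
    2 * ⟪α, β⟫ / ⟪β, β⟫ * (2 * ⟪β, α⟫ / ⟪α, α⟫) < 4 := by
  have hαα := inner_self_pos hα
  have hββ := inner_self_pos hβ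
  have hcs : ⟪α, β⟫ ^ 2 < ⟪α, α⟫ * ⟪β, β⟫ := by
    rw [real_inner_self_eq_norm_sq, real_inner_self_eq_norm_sq, ← mul_pow]
    exact pow_lt_pow_left₀ (inner_lt_norm_mul_norm hα hβ hne) hpos.le two_ne_zero
  rw [real_inner_comm α β, div_mul_div_comm, div_lt_iff₀ (mul_pos hββ hαα)]
  nlinarith

theorem sub_mem_of_inner_pos {α β : V} (hα : α ∈ D.Φ) (hβ : β ∈ D.Φ) (hne : α ≠ β)
    (hpos : 0 < ⟪α, β⟫) : α - β ∈ D.Φ := by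
  obtain ⟨p, hp⟩ := D.crystal β hβ α hα
  obtain ⟨q, hq⟩ := D.crystal α hα β hβ
  have hp0 : (0 : ℝ) < p := hp ▸ div_pos (by linarith) (inner_self_pos hβ)
  have hq0 : (0 : ℝ) < q := hq ▸ div_pos (by rw [real_inner_comm]; linarith) (inner_self_pos hα)
  have hpq : (p : ℝ) * q < 4 := hp ▸ hq ▸ pairing_mul_pairing_lt_four hα hβ hne hpos
  -- One of the positive Cartan integers `p`, `q` is `1`; its reflection gives `±(α - β)`.
  obtain rfl | rfl : p = 1 ∨ q = 1 := by
    have hp1 : 0 < p := by exact_mod_cast hp0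
    have hq1 : 0 < q := by exact_mod_cast hq0
    have hpq' : p * q < 4 := by exact_mod_cast hpq
    by_contra! hne1
    nlinarith [show 2 ≤ p by omega, show 2 ≤ q by omega]
  · have hm := D.reflect_mem β hβ α hα
    rwa [hp, Int.cast_one, one_smul] at hm
  · have hm := neg_mem (D.reflect_mem α hα β hβ)
    rwa [hq, Int.cast_one, one_smul, neg_sub] at hm

namespace IsGeomChain

variable {k : ℕ} {I : ℕ → Set V}

theorem subset_pos (h : D.IsGeomChain k I) {i : ℕ} (hi : i ≤ k) : I i ⊆ D.pos := by
  rcases Nat.eq_zero_or_pos i with rfl | hi0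
  · simp [h.zero]
  · exact (h.ideal i hi0 hi).1

theorem sum_mem (h : D.IsGeomChain k I) {ι : Type*} (s : Finset ι) (a : ι → V) (r : ι → ℕ)
    (ha : ∀ i ∈ s, a i ∈ I (r i)) (hpos : ∑ i ∈ s, a i ∈ D.pos) (hk : ∑ i ∈ s, r i ≤ k) :
    ∑ i ∈ s, a i ∈ I (∑ i ∈ s, r i) := by
  classical
  induction s using Finset.strongInduction with
  | H s ih =>
    set α := ∑ i ∈ s, a i
    have hr_le : ∀ i ∈ s, r i ≤ ∑ j ∈ s, r j := fun i hi => Finset.single_le_sum (by simp) hi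
    have ha_pos : ∀ i ∈ s, a i ∈ D.pos := fun i hi =>
      h.subset_pos ((hr_le i hi).trans hk) (ha i hi)
    obtain ⟨i, hi, hαi⟩ : ∃ i ∈ s, 0 < ⟪α, a i⟫ := by
      refine Finset.exists_lt_of_sum_lt ?_
      rw [Finset.sum_const_zero, ← inner_sum]
      exact inner_self_pos hpos.1
    by_cases hαeq : α = a i
    · exact h.mono _ _ (hr_le i hi) hk (hαeq ▸ ha i hi)
    set β := ∑ j ∈ s.erase i, a j
    have hαβ : a i + β = α := Finset.add_sum_erase s a hi
    have hβ : β ∈ D.pos := by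
      refine ⟨?_, AddSubmonoid.sum_mem _ fun j hj => (ha_pos j (Finset.mem_of_mem_erase hj)).2⟩
      rw [← add_sub_cancel_left (a i) β, hαβ]
      exact sub_mem_of_inner_pos hpos.1 (ha_pos i hi).1 hαeq hαi
    have hrs := Finset.add_sum_erase s r hi
    have hβI : β ∈ I (∑ j ∈ s.erase i, r j) :=
      ih _ (Finset.erase_ssubset hi) (fun j hj => ha j (Finset.mem_of_mem_erase hj)) hβ
        (by omega)
    rw [← hrs]
    exact h.geomI _ _ (by omega) ⟨hαβ ▸ Set.add_mem_add (ha i hi) hβI, hpos⟩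

end IsGeomChain

end RootSystemData

/-- For a geometric chain of ideals `𝓘` and `α ∈ Φ⁺` with
`r_α(𝓘) = r ≤ k`, one has `α ∈ I_r`. -/
theorem statement5 {V : Type*} [NormedAddCommGroup V] [InnerProductSpace ℝ V]
    (D : RootSystemData V) (k : ℕ) (I : ℕ → Set V) (h : D.IsGeomChain k I)
    (α : V) (hα : α ∈ D.pos) (r : ℕ) (hr : IsLeast (D.rVals k I α) r) (hrk : r ≤ k) :
    α ∈ I r := by
  obtain ⟨m, a, ρ, hρ, rfl, rfl⟩ := hr.1
  exact h.sum_mem Finset.univ a ρ (fun i _ => (hρ i).2.2) hα hrk
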